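/- arXiv:math-ph/9811020 — 2 statements merged into one kernel-verified Lean document; each statement's English description precedes it below -/
import Mathlib

section
/- With M_k and h_k as in the Farey and number-theoretical spin chains, Trace([[0,1],[0,1]] · M_k(σ)) = h_k(1-σ) for all σ ∈ {0,1}^k. -/
open Matrix

namespace Farey

def A : Matrix (Fin 2) (Fin 2) ℤ := !![1, 0; 1, 1]
def B : Matrix (Fin 2) (Fin 2) ℤ := !![1, 1; 0, 1]

/-- The Farey spin chain matrix product: `M 0 = 1`,
`M (k+1) σ = A^(1-σ_(k+1)) B^(σ_(k+1)) * M k (σ_1,…,σ_k)`. -/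
def M : (k : ℕ) → (Fin k → Bool) → Matrix (Fin 2) (Fin 2) ℤ
  | 0, _ => 1
  | k + 1, σ => (if σ (Fin.last k) then B else A) * M k (fun i => σ i.castSucc)

/-- The canonical energy numerator of the number-theoretical spin chain:
`h 0 = 1`, `h (k+1) (σ, s) = h k σ + s * h k (1-σ)`. -/
def h : (k : ℕ) → (Fin k → Bool) → ℕ
  | 0, _ => 1
  | k + 1, σ =>
      h k (fun i => σ i.castSucc) +
        if σ (Fin.last k) then h k (fun i => !σ i.castSucc) else 0


lemma rows (k : ℕ) (σ : Fin k → Bool) :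
    M k σ 0 0 + M k σ 0 1 = (h k σ : ℤ) ∧
      M k σ 1 0 + M k σ 1 1 = (h k (fun i => !σ i) : ℤ) := by
  induction k with
  | zero => simp [M, h, Matrix.one_apply]
  | succ k ih =>
    obtain ⟨h0, h1⟩ := ih (fun i => σ i.castSucc)
    have h1' : M k (fun i => σ i.castSucc) 1 0 + M k (fun i => σ i.castSucc) 1 1
        = (h k (fun i => !σ i.castSucc) : ℤ) := h1
    by_cases hs : σ (Fin.last k) <;>
      simp [M, h, hs, Matrix.mul_apply, Fin.sum_univ_two, A, B] <;>
      refine ⟨?_, ?_⟩ <;> push_cast <;> linarith [h0, h1']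

/-- `Trace ([[0,1],[0,1]] * M_k(σ)) = h_k(1-σ)`. -/
theorem trace_proj_M_flip (k : ℕ) (σ : Fin k → Bool) :
    ((!![0, 1; 0, 1] : Matrix (Fin 2) (Fin 2) ℤ) * M k σ).trace
      = (h k (fun i => !σ i) : ℤ) := by
  obtain ⟨h0, h1⟩ := rows k σ
  have : ((!![0, 1; 0, 1] : Matrix (Fin 2) (Fin 2) ℤ) * M k σ).trace
      = M k σ 1 0 + M k σ 1 1 := by
    simp [Matrix.trace, Matrix.mul_apply, Fin.sum_univ_two, Matrix.diag]
  rw [this, h1]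

end Farey
end

section
/- If σ ∈ {0,1}^k is neither the all-zero nor the all-one configuration, then T_k(σ) := Trace(M_k(σ)) > k. In fact both off-diagonal entries of M_k(σ) are at least 1 for such σ. -/
open Matrix

namespace Farey

lemma Amul (N : Matrix (Fin 2) (Fin 2) ℤ) :
    (A * N) 0 0 = N 0 0 ∧ (A * N) 0 1 = N 0 1 ∧
    (A * N) 1 0 = N 0 0 + N 1 0 ∧ (A * N) 1 1 = N 0 1 + N 1 1 := by
  refine ⟨?_, ?_, ?_, ?_⟩ <;> simp [A, Matrix.mul_apply, Fin.sum_univ_two]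

lemma Bmul (N : Matrix (Fin 2) (Fin 2) ℤ) :
    (B * N) 0 0 = N 0 0 + N 1 0 ∧ (B * N) 0 1 = N 0 1 + N 1 1 ∧
    (B * N) 1 0 = N 1 0 ∧ (B * N) 1 1 = N 1 1 := by
  refine ⟨?_, ?_, ?_, ?_⟩ <;> simp [B, Matrix.mul_apply, Fin.sum_univ_two]

lemma key : ∀ (k : ℕ) (σ : Fin k → Bool),
    ((∀ i, σ i = false) ∧ M k σ 0 0 = 1 ∧ M k σ 0 1 = 0 ∧
      M k σ 1 0 = (k : ℤ) ∧ M k σ 1 1 = 1) ∨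
    ((∀ i, σ i = true) ∧ M k σ 0 0 = 1 ∧ M k σ 0 1 = (k : ℤ) ∧
      M k σ 1 0 = 0 ∧ M k σ 1 1 = 1) ∨
    (1 ≤ M k σ 0 0 ∧ 1 ≤ M k σ 0 1 ∧ 1 ≤ M k σ 1 0 ∧ 1 ≤ M k σ 1 1 ∧
      (k : ℤ) + 1 ≤ M k σ 0 0 + M k σ 1 1) := by
  intro k
  induction k with
  | zero =>
    intro σ
    left
    refine ⟨fun i => i.elim0, ?_, ?_, ?_, ?_⟩ <;> simp [M, Matrix.one_apply]
  | succ k ih =>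
    intro σ
    have hk1 : k ≠ 0 → (1 : ℤ) ≤ (k : ℤ) := by
      intro h; exact_mod_cast Nat.one_le_iff_ne_zero.mpr h
    have hM : M (k+1) σ = (if σ (Fin.last k) then B else A) * M k (fun i => σ i.castSucc) := rfl
    cases hlast : σ (Fin.last k) with
    | false =>
      have hM' : M (k+1) σ = A * M k (fun i => σ i.castSucc) := by rw [hM, hlast]; simp
      obtain ⟨e00, e01, e10, e11⟩ := Amul (M k (fun i => σ i.castSucc))
      rcases ih (fun i => σ i.castSucc) with ⟨hall, h00, h01, h10, h11⟩ |
        ⟨hall, h00, h01, h10, h11⟩ | ⟨h00, h01, h10, h11, htr⟩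
      · left
        refine ⟨?_, ?_, ?_, ?_, ?_⟩
        · intro i
          induction i using Fin.lastCases with
          | last => exact hlast
          | cast j => exact hall j
        all_goals
          rw [hM']
          simp only [e00, e01, e10, e11, h00, h01, h10, h11]
          try push_cast
          try ring
      · rcases eq_or_ne k 0 with hk | hk
        · subst hk
          left
          refine ⟨?_, ?_, ?_, ?_, ?_⟩
          · intro i
            induction i using Fin.lastCases with
            | last => exact hlast
            | cast j => exact j.elim0
          all_goals
            rw [hM']
            simp only [e00, e01, e10, e11, h00, h01, h10, h11]
            try norm_num
        · right; right
          have := hk1 hk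
          refine ⟨?_, ?_, ?_, ?_, ?_⟩ <;>
            rw [hM'] <;> simp only [e00, e01, e10, e11, h00, h01, h10, h11] <;>
            push_cast <;> omega
      · right; right
        refine ⟨?_, ?_, ?_, ?_, ?_⟩ <;>
          rw [hM'] <;> simp only [e00, e01, e10, e11] <;> push_cast <;> omega
    | true =>
      have hM' : M (k+1) σ = B * M k (fun i => σ i.castSucc) := by rw [hM, hlast]; simp
      obtain ⟨e00, e01, e10, e11⟩ := Bmul (M k (fun i => σ i.castSucc))
      rcases ih (fun i => σ i.castSucc) with ⟨hall, h00, h01, h10, h11⟩ |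
        ⟨hall, h00, h01, h10, h11⟩ | ⟨h00, h01, h10, h11, htr⟩
      · rcases eq_or_ne k 0 with hk | hk
        · subst hk
          right; left
          refine ⟨?_, ?_, ?_, ?_, ?_⟩
          · intro i
            induction i using Fin.lastCases with
            | last => exact hlast
            | cast j => exact j.elim0
          all_goals
            rw [hM']
            simp only [e00, e01, e10, e11, h00, h01, h10, h11]
            try norm_num
        · right; right
          have := hk1 hk
          refine ⟨?_, ?_, ?_, ?_, ?_⟩ <;>
            rw [hM'] <;> simp only [e00, e01, e10, e11, h00, h01, h10, h11] <;>
            push_cast <;> omega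
      · right; left
        refine ⟨?_, ?_, ?_, ?_, ?_⟩
        · intro i
          induction i using Fin.lastCases with
          | last => exact hlast
          | cast j => exact hall j
        all_goals
          rw [hM']
          simp only [e00, e01, e10, e11, h00, h01, h10, h11]
          try push_cast
          try ring
      · right; right
        refine ⟨?_, ?_, ?_, ?_, ?_⟩ <;>
          rw [hM'] <;> simp only [e00, e01, e10, e11] <;> push_cast <;> omega

/-- If `σ` is neither all-zero nor all-one then both off-diagonal entries of
`M_k(σ)` are `≥ 1` and `T_k(σ) > k`. -/
theorem trace_M_gt (k : ℕ) (σ : Fin k → Bool)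
    (h0 : σ ≠ fun _ => false) (h1 : σ ≠ fun _ => true) :
    1 ≤ M k σ 0 1 ∧ 1 ≤ M k σ 1 0 ∧ (k : ℤ) < (M k σ).trace := by
  rcases key k σ with ⟨hall, _⟩ | ⟨hall, _⟩ | ⟨h00, h01, h10, h11, htr⟩
  · exact absurd (funext hall) h0
  · exact absurd (funext hall) h1
  · refine ⟨h01, h10, ?_⟩
    rw [Matrix.trace_fin_two]
    omega

end Farey
end
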